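/- Under the saturation assumption, if the saturated independent set Î belongs to 𝕀^{−*}∖𝕀*_+ (i.e., Î contains neither i* nor j* and Î is not a subset of any independent set of G containing i* or j*), then there exists δ0∈(0,δ̄] such that Q(Ḡ,α(δ)) > Q(G,α(δ)) for all δ∈(0,δ0); that is, a Braess paradox exists for δ sufficiently small. -/

import Mathlib

open Classical Finset

noncomputable section

def nbr {V : Type} [Fintype V] (G : SimpleGraph V) (S : Finset V) : Finset V :=
  Finset.univ.filter fun j => ∃ i ∈ S, G.Adj i j

def aSum {V : Type} (α : V → ℝ) (S : Finset V) : ℝ := ∑ i ∈ S, α i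

def IsIndep {V : Type} (G : SimpleGraph V) (I : Finset V) : Prop :=
  I.Nonempty ∧ ∀ i ∈ I, ∀ j ∈ I, ¬ G.Adj i j

def indepSets {V : Type} [Fintype V] (G : SimpleGraph V) : Finset (Finset V) :=
  Finset.univ.filter fun I => IsIndep G I

def Ncond {V : Type} [Fintype V] (G : SimpleGraph V) (α : V → ℝ) : Prop :=
  ∀ I ∈ indepSets G, aSum α I < aSum α (nbr G I)

def Tlist {V : Type} [Fintype V] [DecidableEq V] (G : SimpleGraph V) (α : V → ℝ) :
    List V → Finset V → ℝ
  | [], _ => 1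
  | i :: l, P =>
      α i / (aSum α (nbr G (insert i P)) - aSum α (insert i P)) * Tlist G α l (insert i P)

def Erat {V : Type} [Fintype V] [DecidableEq V] (G : SimpleGraph V) (α : V → ℝ) :
    List V → Finset V → ℝ
  | [], _ => 0
  | i :: l, P =>
      aSum α (nbr G (insert i P)) / (aSum α (nbr G (insert i P)) - aSum α (insert i P)) +
        Erat G α l (insert i P)

def TI {V : Type} [Fintype V] [DecidableEq V] (G : SimpleGraph V) (α : V → ℝ) (I : Finset V) : ℝ :=
  ∑ l ∈ I.toList.permutations.toFinset, Tlist G α l ∅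

def EI {V : Type} [Fintype V] [DecidableEq V] (G : SimpleGraph V) (α : V → ℝ) (I : Finset V) : ℝ :=
  ∑ l ∈ I.toList.permutations.toFinset, Erat G α l ∅ * Tlist G α l ∅

def meanQ {V : Type} [Fintype V] [DecidableEq V] (G : SimpleGraph V) (α : V → ℝ) : ℝ :=
  (1 + ∑ I ∈ indepSets G, TI G α I)⁻¹ * ∑ I ∈ indepSets G, EI G α I

def IsWord {V : Type} (G : SimpleGraph V) (w : List V) : Prop :=
  w.Pairwise fun a b => ¬ G.Adj a b

def piHatAux {V : Type} [Fintype V] [DecidableEq V] (G : SimpleGraph V) (α : V → ℝ) :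
    List V → Finset V → ℝ
  | [], _ => 1
  | i :: l, P => α i / aSum α (nbr G (insert i P)) * piHatAux G α l (insert i P)

def piHat {V : Type} [Fintype V] [DecidableEq V] (G : SimpleGraph V) (α : V → ℝ) (w : List V) : ℝ :=
  piHatAux G α w ∅

def addEdge {V : Type} (G : SimpleGraph V) (u v : V) : SimpleGraph V :=
  G ⊔ SimpleGraph.fromEdgeSet {s(u, v)}

end


/-!
As `δ → 0` only the words `l` that pass through the saturated set `Î` blow up: at that step the
denominator `gap G α(δ) Î = δ · gap G b Î` vanishes to first order, so `δ · Tlist` and `δ · Erat`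
have finite limits, positive for the word `Î.toList`. Splitting every sum over independent sets
into the sets containing `Î` and the others gives `E = Es + Er` and `T = Ts + Tr` with
`Es ∼ δ⁻²` and `Ts ∼ δ⁻¹`, while `Er` and `Tr` are continuous at `δ = 0`. The sets containing `Î`
avoid `i*` and `j*`, so `Es` and `Ts` are the same for `G` and `Ḡ`, and
`δ² (Ē (1 + T) - E (1 + T̄)) → lim δ² Es · (Tr(a) - T̄r(a))`.
Adding an edge only enlarges neighbourhoods, so `T̄r(a) ≤ Tr(a)`, strictly because of the term of
the singleton `{i*}`; hence `Q(Ḡ) > Q(G)` for small `δ`.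
-/

open Filter Topology

namespace MatchingGraph

section Graph

variable {V : Type} {G H : SimpleGraph V}

lemma le_addEdge (u v : V) : G ≤ addEdge G u v := le_sup_left

lemma addEdge_adj {u v i j : V} :
    (addEdge G u v).Adj i j ↔ G.Adj i j ∨ ((i = u ∧ j = v) ∨ (i = v ∧ j = u)) ∧ i ≠ j := by
  simp [addEdge, SimpleGraph.fromEdgeSet_adj]

variable [Fintype V]

@[simp]
lemma mem_nbr {S : Finset V} {j : V} : j ∈ nbr G S ↔ ∃ i ∈ S, G.Adj i j := by
  simp [nbr]

lemma mem_indepSets {I : Finset V} :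
    I ∈ indepSets G ↔ I.Nonempty ∧ ∀ i ∈ I, ∀ j ∈ I, ¬ G.Adj i j := by
  rw [indepSets, Finset.mem_filter]
  simp [IsIndep]

lemma nbr_mono (hGH : G ≤ H) (S : Finset V) : nbr G S ⊆ nbr H S := by
  intro j
  simp only [mem_nbr]
  exact fun ⟨i, hi, hij⟩ => ⟨i, hi, hGH hij⟩

lemma indepSets_anti (hGH : G ≤ H) : indepSets H ⊆ indepSets G := by
  intro I
  simp only [mem_indepSets]
  exact fun ⟨hne, hI⟩ => ⟨hne, fun i hi j hj hij => hI i hi j hj (hGH hij)⟩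

lemma mem_indepSets_of_subset {I J : Finset V} (hI : I ∈ indepSets G) (hJI : J ⊆ I)
    (hJ : J.Nonempty) : J ∈ indepSets G := by
  rw [mem_indepSets] at hI ⊢
  exact ⟨hJ, fun i hi j hj => hI.2 i (hJI hi) j (hJI hj)⟩

lemma singleton_mem_indepSets (i : V) : {i} ∈ indepSets G := by
  simp [mem_indepSets]

lemma nbr_addEdge_of_not_mem {u v : V} {S : Finset V} (hu : u ∉ S) (hv : v ∉ S) :
    nbr (addEdge G u v) S = nbr G S := by
  refine (nbr_mono (le_addEdge u v) S).antisymm' fun j => ?_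
  simp only [mem_nbr, addEdge_adj]
  rintro ⟨i, hi, hij | ⟨⟨rfl, rfl⟩ | ⟨rfl, rfl⟩, -⟩⟩
  exacts [⟨i, hi, hij⟩, absurd hi hu, absurd hi hv]

lemma mem_indepSets_addEdge {u v : V} {I : Finset V} (hI : I ∈ indepSets G)
    (huv : ¬(u ∈ I ∧ v ∈ I)) : I ∈ indepSets (addEdge G u v) := by
  rw [mem_indepSets] at hI ⊢
  refine ⟨hI.1, fun i hi j hj hij => ?_⟩
  rcases addEdge_adj.mp hij with hij | ⟨⟨rfl, rfl⟩ | ⟨rfl, rfl⟩, -⟩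
  exacts [hI.2 i hi j hj hij, huv ⟨hi, hj⟩, huv ⟨hj, hi⟩]

variable [DecidableEq V]

lemma nbr_addEdge_singleton {u v : V} (huv : u ≠ v) :
    nbr (addEdge G u v) {u} = insert v (nbr G {u}) := by
  ext j
  simp only [mem_insert, mem_nbr, mem_singleton, exists_eq_left, addEdge_adj]
  grind

end Graph

section Gap

variable {V : Type}

lemma continuous_aSum (S : Finset V) : Continuous fun α : V → ℝ => aSum α S :=
  continuous_finsetSum S fun i _ => continuous_apply i

variable [Fintype V] {G H : SimpleGraph V}

noncomputable def gap (G : SimpleGraph V) (α : V → ℝ) (S : Finset V) : ℝ :=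
  aSum α (nbr G S) - aSum α S

lemma continuous_gap (S : Finset V) : Continuous fun α : V → ℝ => gap G α S :=
  (continuous_aSum _).sub (continuous_aSum _)

lemma gap_le_gap_of_le (hGH : G ≤ H) {α : V → ℝ} (hα : ∀ i, 0 ≤ α i) (S : Finset V) :
    gap G α S ≤ gap H α S :=
  sub_le_sub_right (sum_le_sum_of_subset_of_nonneg (nbr_mono hGH S) fun i _ _ => hα i) _

lemma gap_affine (a b : V → ℝ) (δ : ℝ) (S : Finset V) :
    gap G (fun i => a i + b i * δ) S = gap G a S + δ * gap G b S := by
  simp only [gap, aSum, sum_add_distrib, ← sum_mul]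
  ring

lemma Ncond.mono (hGH : G ≤ H) {α : V → ℝ} (hα : ∀ i, 0 ≤ α i) (hN : Ncond G α) :
    Ncond H α := fun I hI =>
  sub_pos.mp ((sub_pos.mpr (hN I (indepSets_anti hGH hI))).trans_le
    (gap_le_gap_of_le hGH hα I))

lemma gap_nonneg_of_forall_Ncond {a b : V → ℝ} {δbar : ℝ} (hδbar : 0 < δbar)
    (hN : ∀ δ : ℝ, 0 < δ → δ ≤ δbar → Ncond G fun i => a i + b i * δ) {Q : Finset V}
    (hQ : Q ∈ indepSets G) : 0 ≤ gap G a Q := by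
  have hlim : Tendsto (fun δ => gap G a Q + δ * gap G b Q) (𝓝[>] 0) (𝓝 (gap G a Q)) := by
    simpa using (tendsto_const_nhds.add (tendsto_id.mul tendsto_const_nhds)).mono_left
      (nhdsWithin_le_nhds (a := (0 : ℝ)) (s := Set.Ioi 0))
  refine ge_of_tendsto hlim ?_
  filter_upwards [Ioo_mem_nhdsGT hδbar] with δ hδ
  rw [← gap_affine]
  exact (sub_pos.mpr (hN δ hδ.1 hδ.2.le Q hQ)).le

end Gap

section Prefix

variable {V : Type} [DecidableEq V]

-- The sets at which the denominators of `Tlist G α l P` and `Erat G α l P` are evaluated.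
def prefixSets (P : Finset V) : List V → List (Finset V)
  | [] => []
  | i :: l => insert i P :: prefixSets (insert i P) l

lemma prefixSets_append (P : Finset V) (l₁ l₂ : List V) :
    prefixSets P (l₁ ++ l₂) = prefixSets P l₁ ++ prefixSets (P ∪ l₁.toFinset) l₂ := by
  induction l₁ generalizing P with
  | nil => simp [prefixSets]
  | cons i l ih => simp [prefixSets, ih, union_insert, insert_union]

lemma exists_eq_append_of_mem_prefixSets {P Q : Finset V} {l : List V}
    (hQ : Q ∈ prefixSets P l) :
    ∃ l₁ i l₂, l = l₁ ++ i :: l₂ ∧ Q = insert i (P ∪ l₁.toFinset) := by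
  induction l generalizing P with
  | nil => simp [prefixSets] at hQ
  | cons j l ih =>
    rcases List.mem_cons.mp hQ with rfl | hQ
    · exact ⟨[], j, l, rfl, by simp⟩
    · obtain ⟨l₁, i, l₂, rfl, rfl⟩ := ih hQ
      exact ⟨j :: l₁, i, l₂, rfl, by simp [union_insert, insert_union]⟩

lemma union_toFinset_mem_prefixSets (P : Finset V) {l : List V} (hl : l ≠ []) :
    P ∪ l.toFinset ∈ prefixSets P l := by
  induction l generalizing P with
  | nil => exact absurd rfl hl
  | cons i l ih =>
    rcases eq_or_ne l [] with rfl | hl'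
    · simp [prefixSets]
    · simpa [prefixSets, union_insert, insert_union] using Or.inr (ih (insert i P) hl')

lemma nodup_prefixSets {P : Finset V} {l : List V} (hl : l.Nodup) (hP : ∀ x ∈ l, x ∉ P) :
    (prefixSets P l).Nodup := by
  induction l generalizing P with
  | nil => exact List.nodup_nil
  | cons i l ih =>
    rw [List.nodup_cons] at hl
    refine List.nodup_cons.mpr ⟨fun hmem => ?_, ih hl.2 fun x hx => ?_⟩
    · obtain ⟨l₁, x, l₂, rfl, hQ⟩ := exists_eq_append_of_mem_prefixSets hmem
      have hx : x ∈ insert i P := hQ ▸ mem_insert_self _ _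
      rcases mem_insert.mp hx with rfl | hx
      · exact hl.1 (by simp)
      · exact hP x (by simp) hx
    · rw [mem_insert, not_or]
      exact ⟨fun h => hl.1 (h ▸ hx), hP x (List.mem_cons_of_mem _ hx)⟩

lemma nodup_and_toFinset_eq_of_mem {I : Finset V} {l : List V}
    (hl : l ∈ I.toList.permutations.toFinset) : l.Nodup ∧ l.toFinset = I := by
  rw [List.mem_toFinset, List.mem_permutations] at hl
  exact ⟨hl.nodup_iff.mpr I.nodup_toList, by rw [List.toFinset_eq_of_perm _ _ hl, toList_toFinset]⟩

end Prefix

section Words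

variable {V : Type} [Fintype V] [DecidableEq V] {G H : SimpleGraph V}

lemma Tlist_cons (α : V → ℝ) (i : V) (l : List V) (P : Finset V) :
    Tlist G α (i :: l) P = α i / gap G α (insert i P) * Tlist G α l (insert i P) := rfl

lemma Erat_cons (α : V → ℝ) (i : V) (l : List V) (P : Finset V) :
    Erat G α (i :: l) P =
      aSum α (nbr G (insert i P)) / gap G α (insert i P) + Erat G α l (insert i P) := rfl

lemma Tlist_append (α : V → ℝ) (l₁ l₂ : List V) (P : Finset V) :
    Tlist G α (l₁ ++ l₂) P = Tlist G α l₁ P * Tlist G α l₂ (P ∪ l₁.toFinset) := by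
  induction l₁ generalizing P with
  | nil => simp [Tlist]
  | cons i l ih => simp [Tlist_cons, ih, union_insert, insert_union, mul_assoc]

lemma Erat_append (α : V → ℝ) (l₁ l₂ : List V) (P : Finset V) :
    Erat G α (l₁ ++ l₂) P = Erat G α l₁ P + Erat G α l₂ (P ∪ l₁.toFinset) := by
  induction l₁ generalizing P with
  | nil => simp [Erat]
  | cons i l ih => simp [Erat_cons, ih, union_insert, insert_union, add_assoc]

lemma continuousAt_Tlist {a : V → ℝ} {l : List V} {P : Finset V}
    (h : ∀ Q ∈ prefixSets P l, gap G a Q ≠ 0) :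
    ContinuousAt (fun α => Tlist G α l P) a := by
  induction l generalizing P with
  | nil => exact continuousAt_const
  | cons i l ih =>
    simp only [prefixSets, List.forall_mem_cons] at h
    simp only [Tlist_cons]
    exact ((continuous_apply i).continuousAt.div (continuous_gap _).continuousAt h.1).mul
      (ih h.2)

lemma continuousAt_Erat {a : V → ℝ} {l : List V} {P : Finset V}
    (h : ∀ Q ∈ prefixSets P l, gap G a Q ≠ 0) :
    ContinuousAt (fun α => Erat G α l P) a := by
  induction l generalizing P with
  | nil => exact continuousAt_const
  | cons i l ih =>
    simp only [prefixSets, List.forall_mem_cons] at h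
    simp only [Erat_cons]
    exact ((continuous_aSum _).continuousAt.div (continuous_gap _).continuousAt h.1).add (ih h.2)

lemma Tlist_pos {α : V → ℝ} (hα : ∀ i, 0 < α i) {l : List V} {P : Finset V}
    (h : ∀ Q ∈ prefixSets P l, 0 < gap G α Q) : 0 < Tlist G α l P := by
  induction l generalizing P with
  | nil => exact one_pos
  | cons i l ih =>
    simp only [prefixSets, List.forall_mem_cons] at h
    exact mul_pos (div_pos (hα i) h.1) (ih h.2)

lemma Tlist_le_Tlist_of_le (hGH : G ≤ H) {α : V → ℝ} (hα : ∀ i, 0 < α i) {l : List V}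
    {P : Finset V} (h : ∀ Q ∈ prefixSets P l, 0 < gap G α Q) :
    Tlist H α l P ≤ Tlist G α l P := by
  induction l generalizing P with
  | nil => exact le_rfl
  | cons i l ih =>
    simp only [prefixSets, List.forall_mem_cons] at h
    have hgap := gap_le_gap_of_le hGH (fun j => (hα j).le) (insert i P)
    have hH : 0 < Tlist H α l (insert i P) := Tlist_pos hα fun Q hQ =>
      (h.2 Q hQ).trans_le (gap_le_gap_of_le hGH (fun j => (hα j).le) Q)
    exact mul_le_mul (div_le_div_of_nonneg_left (hα i).le h.1 hgap) (ih h.2) hH.le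
      (div_pos (hα i) h.1).le

lemma Tlist_congr_graph (α : V → ℝ) {l : List V} {P : Finset V}
    (h : ∀ Q ∈ prefixSets P l, nbr H Q = nbr G Q) : Tlist H α l P = Tlist G α l P := by
  induction l generalizing P with
  | nil => rfl
  | cons i l ih =>
    simp only [prefixSets, List.forall_mem_cons] at h
    simp only [Tlist_cons, gap, h.1, ih h.2]

lemma Erat_congr_graph (α : V → ℝ) {l : List V} {P : Finset V}
    (h : ∀ Q ∈ prefixSets P l, nbr H Q = nbr G Q) : Erat H α l P = Erat G α l P := by
  induction l generalizing P with
  | nil => rfl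
  | cons i l ih =>
    simp only [prefixSets, List.forall_mem_cons] at h
    simp only [Erat_cons, gap, h.1, ih h.2]

end Words

section IndepSets

variable {V : Type} [Fintype V] [DecidableEq V] {G H : SimpleGraph V}

lemma forall_mem_prefixSets_of_subset {p : Finset V → Prop} {I : Finset V}
    (hI : I ∈ indepSets G) (h : ∀ Q ∈ indepSets G, Q ⊆ I → p Q) {l : List V}
    (hl : l ∈ I.toList.permutations.toFinset) : ∀ Q ∈ prefixSets ∅ l, p Q := by
  intro Q hQ
  obtain ⟨l₁, i, l₂, rfl, rfl⟩ := exists_eq_append_of_mem_prefixSets hQ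
  have hsub : insert i (∅ ∪ l₁.toFinset) ⊆ I := by
    rw [← (nodup_and_toFinset_eq_of_mem hl).2]
    intro x
    simp +contextual [or_imp]
  exact h _ (mem_indepSets_of_subset hI hsub (insert_nonempty _ _)) hsub

lemma TI_singleton (α : V → ℝ) (i : V) : TI G α {i} = α i / gap G α {i} := by
  have hwords : [i].permutations.toFinset = {[i]} := by
    ext l
    simp [List.mem_permutations]
  simp [TI, hwords, Tlist, gap]

lemma TI_nonneg {α : V → ℝ} (hα : ∀ i, 0 < α i) {I : Finset V} (hI : I ∈ indepSets G)
    (h : ∀ Q ∈ indepSets G, Q ⊆ I → 0 < gap G α Q) : 0 ≤ TI G α I :=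
  sum_nonneg fun _ hl => (Tlist_pos hα (forall_mem_prefixSets_of_subset hI h hl)).le

lemma TI_le_TI_of_le (hGH : G ≤ H) {α : V → ℝ} (hα : ∀ i, 0 < α i) {I : Finset V}
    (hI : I ∈ indepSets G) (h : ∀ Q ∈ indepSets G, Q ⊆ I → 0 < gap G α Q) :
    TI H α I ≤ TI G α I :=
  sum_le_sum fun _ hl => Tlist_le_Tlist_of_le hGH hα (forall_mem_prefixSets_of_subset hI h hl)

lemma continuousAt_TI_EI {a : V → ℝ} {I : Finset V} (hI : I ∈ indepSets G)
    (h : ∀ Q ∈ indepSets G, Q ⊆ I → gap G a Q ≠ 0) :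
    ContinuousAt (fun α => TI G α I) a ∧ ContinuousAt (fun α => EI G α I) a := by
  have hl := fun l (hl : l ∈ I.toList.permutations.toFinset) =>
    forall_mem_prefixSets_of_subset hI h hl
  exact ⟨tendsto_finsetSum _ fun l hl' => continuousAt_Tlist (hl l hl'),
    tendsto_finsetSum _ fun l hl' =>
      (continuousAt_Erat (hl l hl')).mul (continuousAt_Tlist (hl l hl'))⟩

lemma TI_EI_congr_graph (α : V → ℝ) {I : Finset V} (hI : I ∈ indepSets G)
    (h : ∀ Q ⊆ I, nbr H Q = nbr G Q) : TI H α I = TI G α I ∧ EI H α I = EI G α I := by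
  have hl := fun l (hl : l ∈ I.toList.permutations.toFinset) =>
    forall_mem_prefixSets_of_subset hI (fun Q _ hQ => h Q hQ) hl
  exact ⟨sum_congr rfl fun l hl' => Tlist_congr_graph α (hl l hl'),
    sum_congr rfl fun l hl' => by
      rw [Tlist_congr_graph α (hl l hl'), Erat_congr_graph α (hl l hl')]⟩

lemma one_add_sum_TI_pos {α : V → ℝ} (hα : ∀ i, 0 < α i) (hN : Ncond G α) :
    0 < 1 + ∑ I ∈ indepSets G, TI G α I :=
  add_pos_of_pos_of_nonneg one_pos <| sum_nonneg fun _ hI =>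
    TI_nonneg hα hI fun Q hQ _ => sub_pos.mpr (hN Q hQ)

end IndepSets

section Saturation

variable {V : Type} (a b : V → ℝ)

lemma tendsto_affine : Tendsto (fun δ : ℝ => fun i => a i + b i * δ) (𝓝 0) (𝓝 a) := by
  have : Continuous fun δ : ℝ => fun i => a i + b i * δ := by fun_prop
  simpa using this.tendsto 0

variable [Fintype V] [DecidableEq V] {G : SimpleGraph V}

lemma tendsto_mul_Tlist_Erat_of_saturated {P J : Finset V} {l₁ l₂ : List V} {i : V}
    (hJ : insert i (P ∪ l₁.toFinset) = J) (hsat : gap G a J = 0)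
    (h₁ : ∀ Q ∈ prefixSets P l₁, gap G a Q ≠ 0) (h₂ : ∀ Q ∈ prefixSets J l₂, gap G a Q ≠ 0) :
    Tendsto (fun δ => δ * Tlist G (fun i => a i + b i * δ) (l₁ ++ i :: l₂) P) (𝓝[≠] 0)
        (𝓝 (Tlist G a l₁ P * (a i / gap G b J) * Tlist G a l₂ J)) ∧
      Tendsto (fun δ => δ * Erat G (fun i => a i + b i * δ) (l₁ ++ i :: l₂) P) (𝓝[≠] 0)
        (𝓝 (aSum a (nbr G J) / gap G b J)) := by
  have hcurve := (tendsto_affine a b).mono_left (nhdsWithin_le_nhds : 𝓝[≠] (0 : ℝ) ≤ 𝓝 0)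
  have hδ : Tendsto (fun δ : ℝ => δ) (𝓝[≠] 0) (𝓝 0) := nhdsWithin_le_nhds
  have hgapJ (δ : ℝ) : gap G (fun i => a i + b i * δ) J = δ * gap G b J := by
    rw [gap_affine, hsat, zero_add]
  have hcancel {δ : ℝ} (hδ : δ ≠ 0) (x : ℝ) : δ * (x / (δ * gap G b J)) = x / gap G b J := by
    rw [mul_div_assoc', mul_div_mul_left _ _ hδ]
  constructor
  · have hT₁ := (continuousAt_Tlist h₁).tendsto.comp hcurve
    have hT₂ := (continuousAt_Tlist h₂).tendsto.comp hcurve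
    have hαi := ((continuous_apply i).continuousAt.tendsto.comp hcurve).div_const (gap G b J)
    refine ((hT₁.mul hαi).mul hT₂).congr' ?_
    filter_upwards [self_mem_nhdsWithin] with δ hδ0
    simp only [Function.comp_apply, Tlist_append, Tlist_cons, hJ, hgapJ]
    rw [← hcancel hδ0]
    ring
  · have hE₁ := (continuousAt_Erat h₁).tendsto.comp hcurve
    have hE₂ := (continuousAt_Erat h₂).tendsto.comp hcurve
    have hS := ((continuous_aSum (nbr G J)).continuousAt.tendsto.comp hcurve).div_const (gap G b J)
    have := ((hδ.mul hE₁).add hS).add (hδ.mul hE₂)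
    simp only [zero_mul, zero_add, add_zero] at this
    refine this.congr' ?_
    filter_upwards [self_mem_nhdsWithin] with δ hδ0
    simp only [Function.comp_apply, Erat_append, Erat_cons, hJ, hgapJ]
    rw [← hcancel hδ0]
    ring

variable {a b} {Ihat : Finset V}

lemma exists_tendsto_word (ha : ∀ i, 0 < a i)
    (hgap : ∀ Q ∈ indepSets G, Q ≠ Ihat → 0 < gap G a Q) (hsat : gap G a Ihat = 0)
    (hd : 0 < gap G b Ihat) {I : Finset V} (hI : I ∈ indepSets G) {l : List V}
    (hl : l ∈ I.toList.permutations.toFinset) :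
    ∃ t, 0 ≤ t ∧ (Ihat ∈ prefixSets ∅ l → 0 < t) ∧
      Tendsto (fun δ => δ * Tlist G (fun i => a i + b i * δ) l ∅) (𝓝[≠] 0) (𝓝 t) ∧
      Tendsto (fun δ => δ ^ 2 * (Erat G (fun i => a i + b i * δ) l ∅ *
        Tlist G (fun i => a i + b i * δ) l ∅)) (𝓝[≠] 0)
        (𝓝 (aSum a (nbr G Ihat) / gap G b Ihat * t)) := by
  have hcurve := (tendsto_affine a b).mono_left (nhdsWithin_le_nhds : 𝓝[≠] (0 : ℝ) ≤ 𝓝 0)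
  have hδ : Tendsto (fun δ : ℝ => δ) (𝓝[≠] 0) (𝓝 0) := nhdsWithin_le_nhds
  have hpre : ∀ Q ∈ prefixSets ∅ l, Q ≠ Ihat → 0 < gap G a Q :=
    forall_mem_prefixSets_of_subset hI (fun Q hQ _ => hgap Q hQ) hl
  by_cases hsing : Ihat ∈ prefixSets ∅ l
  · obtain ⟨l₁, i, l₂, rfl, hJ⟩ := exists_eq_append_of_mem_prefixSets hsing
    -- the prefix sets of a word are distinct, so `Ihat` is the only saturated one
    have hnd := nodup_prefixSets (nodup_and_toFinset_eq_of_mem hl).1 (P := ∅) (by simp)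
    rw [prefixSets_append, prefixSets, ← hJ] at hnd hpre
    obtain ⟨-, hnd₂, hdisj⟩ := List.nodup_append.mp hnd
    have h₁ : ∀ Q ∈ prefixSets ∅ l₁, 0 < gap G a Q := fun Q hQ =>
      hpre Q (List.mem_append_left _ hQ) (by rintro rfl; exact hdisj _ hQ _ List.mem_cons_self rfl)
    have h₂ : ∀ Q ∈ prefixSets Ihat l₂, 0 < gap G a Q := fun Q hQ =>
      hpre Q (List.mem_append_right _ (List.mem_cons_of_mem _ hQ))
        (by rintro rfl; exact (List.nodup_cons.mp hnd₂).1 hQ)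
    obtain ⟨hT, hE⟩ := tendsto_mul_Tlist_Erat_of_saturated a b hJ.symm hsat
      (fun Q hQ => (h₁ Q hQ).ne') (fun Q hQ => (h₂ Q hQ).ne')
    have ht : 0 < Tlist G a l₁ ∅ * (a i / gap G b Ihat) * Tlist G a l₂ Ihat :=
      mul_pos (mul_pos (Tlist_pos ha h₁) (div_pos (ha i) hd)) (Tlist_pos ha h₂)
    exact ⟨_, ht.le, fun _ => ht, hT, (hE.mul hT).congr fun δ => by ring⟩
  · have hreg : ∀ Q ∈ prefixSets ∅ l, gap G a Q ≠ 0 := fun Q hQ =>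
      (hpre Q hQ (by rintro rfl; exact hsing hQ)).ne'
    have hT := (continuousAt_Tlist hreg).tendsto.comp hcurve
    have hE := (continuousAt_Erat hreg).tendsto.comp hcurve
    refine ⟨0, le_rfl, fun h => absurd h hsing, ?_, ?_⟩
    · simpa using hδ.mul hT
    · simpa using (hδ.pow 2).mul (hE.mul hT)

lemma exists_tendsto_sum_of_saturated (ha : ∀ i, 0 < a i)
    (hgap : ∀ Q ∈ indepSets G, Q ≠ Ihat → 0 < gap G a Q) (hsat : gap G a Ihat = 0)
    (hd : 0 < gap G b Ihat) {𝒮 : Finset (Finset V)} (h𝒮 : 𝒮 ⊆ indepSets G)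
    (hIhat : Ihat ∈ 𝒮) :
    ∃ B, 0 < B ∧
      Tendsto (fun δ => δ * ∑ I ∈ 𝒮, TI G (fun i => a i + b i * δ) I) (𝓝[≠] 0) (𝓝 B) ∧
      Tendsto (fun δ => δ ^ 2 * ∑ I ∈ 𝒮, EI G (fun i => a i + b i * δ) I) (𝓝[≠] 0)
        (𝓝 (aSum a (nbr G Ihat) / gap G b Ihat * B)) := by
  have hword := fun I (hI : I ∈ 𝒮) l (hl : l ∈ I.toList.permutations.toFinset) =>
    exists_tendsto_word ha hgap hsat hd (h𝒮 hI) hl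
  choose! t ht₀ htpos hT hE using hword
  refine ⟨∑ I ∈ 𝒮, ∑ l ∈ I.toList.permutations.toFinset, t I l, ?_, ?_, ?_⟩
  · have hIhat_ne := (mem_indepSets.mp (h𝒮 hIhat)).1
    have hself : Ihat.toList ∈ Ihat.toList.permutations.toFinset := by
      simp [List.mem_permutations]
    have hsing : Ihat ∈ prefixSets ∅ Ihat.toList := by
      simpa using union_toFinset_mem_prefixSets ∅ (toList_eq_nil.not.mpr hIhat_ne.ne_empty)
    refine sum_pos' (fun I hI => sum_nonneg fun l hl => ht₀ I hI l hl) ⟨Ihat, hIhat, ?_⟩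
    exact sum_pos' (fun l hl => ht₀ Ihat hIhat l hl) ⟨_, hself, htpos Ihat hIhat _ hself hsing⟩
  · simp only [TI, mul_sum]
    exact tendsto_finsetSum _ fun I hI => tendsto_finsetSum _ fun l hl => hT I hI l hl
  · simp only [EI, mul_sum]
    exact tendsto_finsetSum _ fun I hI => tendsto_finsetSum _ fun l hl => hE I hI l hl

end Saturation

section AddEdge

variable {V : Type} [Fintype V] [DecidableEq V] {G H : SimpleGraph V} {a : V → ℝ}
  {Ihat : Finset V}

lemma continuousAt_sum_TI_EI_of_not_subset
    (hgap : ∀ Q ∈ indepSets H, Q ≠ Ihat → 0 < gap H a Q) :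
    ContinuousAt (fun α => ∑ I ∈ indepSets H with ¬ Ihat ⊆ I, TI H α I) a ∧
      ContinuousAt (fun α => ∑ I ∈ indepSets H with ¬ Ihat ⊆ I, EI H α I) a := by
  have hI : ∀ I ∈ {I ∈ indepSets H | ¬ Ihat ⊆ I},
      ContinuousAt (fun α => TI H α I) a ∧ ContinuousAt (fun α => EI H α I) a := by
    intro I hI
    rw [mem_filter] at hI
    exact continuousAt_TI_EI hI.1 fun Q hQ hQI =>
      (hgap Q hQ (by rintro rfl; exact hI.2 hQI)).ne'
  exact ⟨tendsto_finsetSum _ fun I h => (hI I h).1, tendsto_finsetSum _ fun I h => (hI I h).2⟩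

variable {u v : V}

lemma filter_indepSets_addEdge (hfree : ∀ J ∈ indepSets G, Ihat ⊆ J → u ∉ J ∧ v ∉ J) :
    {I ∈ indepSets (addEdge G u v) | Ihat ⊆ I} = {I ∈ indepSets G | Ihat ⊆ I} := by
  ext I
  simp only [mem_filter]
  exact ⟨fun h => ⟨indepSets_anti (le_addEdge u v) h.1, h.2⟩,
    fun h => ⟨mem_indepSets_addEdge h.1 fun huv => (hfree I h.1 h.2).1 huv.1, h.2⟩⟩

lemma sum_indepSets_addEdge (hfree : ∀ J ∈ indepSets G, Ihat ⊆ J → u ∉ J ∧ v ∉ J)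
    (f : SimpleGraph V → Finset V → ℝ)
    (hf : ∀ I ∈ indepSets G, (∀ Q ⊆ I, nbr (addEdge G u v) Q = nbr G Q) →
      f (addEdge G u v) I = f G I) :
    ∑ I ∈ indepSets (addEdge G u v), f (addEdge G u v) I =
      ∑ I ∈ indepSets G with Ihat ⊆ I, f G I +
        ∑ I ∈ indepSets (addEdge G u v) with ¬ Ihat ⊆ I, f (addEdge G u v) I := by
  rw [← sum_filter_add_sum_filter_not _ (Ihat ⊆ ·), filter_indepSets_addEdge hfree]
  congr 1
  refine sum_congr rfl fun I hI => hf I (mem_filter.mp hI).1 fun Q hQ => ?_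
  obtain ⟨hu, hv⟩ := hfree I (mem_filter.mp hI).1 (mem_filter.mp hI).2
  exact nbr_addEdge_of_not_mem (fun h => hu (hQ h)) (fun h => hv (hQ h))

lemma gap_addEdge_singleton (huv : u ≠ v) (hadj : ¬ G.Adj u v) (α : V → ℝ) :
    gap (addEdge G u v) α {u} = gap G α {u} + α v := by
  have hv : v ∉ nbr G {u} := by simpa using hadj
  simp only [gap, aSum, nbr_addEdge_singleton huv, sum_insert hv]
  ring

lemma sum_TI_addEdge_lt_of_not_subset (ha : ∀ i, 0 < a i)
    (hgap : ∀ Q ∈ indepSets G, Q ≠ Ihat → 0 < gap G a Q) (hIhat : Ihat.Nonempty)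
    (hu : u ∉ Ihat) (huv : u ≠ v) (hadj : ¬ G.Adj u v) :
    ∑ I ∈ indepSets (addEdge G u v) with ¬ Ihat ⊆ I, TI (addEdge G u v) a I <
      ∑ I ∈ indepSets G with ¬ Ihat ⊆ I, TI G a I := by
  have hpos : ∀ I ∈ indepSets G, ¬ Ihat ⊆ I → ∀ Q ∈ indepSets G, Q ⊆ I → 0 < gap G a Q :=
    fun I _ hI Q hQ hQI => hgap Q hQ (by rintro rfl; exact hI hQI)
  have hsub : {I ∈ indepSets (addEdge G u v) | ¬ Ihat ⊆ I} ⊆ {I ∈ indepSets G | ¬ Ihat ⊆ I} :=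
    filter_subset_filter _ (indepSets_anti (le_addEdge u v))
  have hu' : {u} ∈ {I ∈ indepSets (addEdge G u v) | ¬ Ihat ⊆ I} := by
    refine mem_filter.mpr ⟨singleton_mem_indepSets u, fun h => ?_⟩
    obtain ⟨x, hx⟩ := hIhat
    exact hu (mem_singleton.mp (h hx) ▸ hx)
  calc ∑ I ∈ indepSets (addEdge G u v) with ¬ Ihat ⊆ I, TI (addEdge G u v) a I
      < ∑ I ∈ indepSets (addEdge G u v) with ¬ Ihat ⊆ I, TI G a I := by
        refine sum_lt_sum (fun I hI => ?_) ⟨{u}, hu', ?_⟩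
        · have hI := mem_filter.mp (hsub hI)
          exact TI_le_TI_of_le (le_addEdge u v) ha hI.1 (hpos I hI.1 hI.2)
        · have hgu := hgap {u} (singleton_mem_indepSets u) fun h => hu (h ▸ mem_singleton_self u)
          rw [TI_singleton, TI_singleton, gap_addEdge_singleton huv hadj]
          exact div_lt_div_of_pos_left (ha u) hgu (lt_add_of_pos_right _ (ha v))
    _ ≤ ∑ I ∈ indepSets G with ¬ Ihat ⊆ I, TI G a I := by
        refine sum_le_sum_of_subset_of_nonneg hsub fun I hI _ => ?_
        have hI := mem_filter.mp hI
        exact TI_nonneg ha hI.1 (hpos I hI.1 hI.2)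

end AddEdge

lemma eventually_mul_lt_mul_of_tendsto {Ts Es Tr Er Tr' Er' : ℝ → ℝ} {B L r r' e e' : ℝ}
    (hTs : Tendsto (fun δ => δ * Ts δ) (𝓝[≠] 0) (𝓝 B))
    (hEs : Tendsto (fun δ => δ ^ 2 * Es δ) (𝓝[≠] 0) (𝓝 L)) (hL : 0 < L)
    (hTr : Tendsto Tr (𝓝[≠] 0) (𝓝 r)) (hTr' : Tendsto Tr' (𝓝[≠] 0) (𝓝 r')) (hr : r' < r)
    (hEr : Tendsto Er (𝓝[≠] 0) (𝓝 e)) (hEr' : Tendsto Er' (𝓝[≠] 0) (𝓝 e')) :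
    ∀ᶠ δ in 𝓝[≠] 0,
      (Es δ + Er δ) * (1 + (Ts δ + Tr' δ)) < (Es δ + Er' δ) * (1 + (Ts δ + Tr δ)) := by
  have hδ : Tendsto (fun δ : ℝ => δ) (𝓝[≠] 0) (𝓝 0) := nhdsWithin_le_nhds
  have hlim := ((hEs.mul (hTr.sub hTr')).add ((hδ.mul (hδ.add hTs)).mul (hEr'.sub hEr))).add
    ((hδ.mul hδ).mul ((hEr'.mul hTr).sub (hEr.mul hTr')))
  simp only [zero_mul, add_zero] at hlim
  filter_upwards [hlim.eventually (eventually_gt_nhds (mul_pos hL (sub_pos.mpr hr))),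
    self_mem_nhdsWithin] with δ hpos hδ0
  have hδ2 : 0 < δ ^ 2 := pow_two_pos_of_ne_zero hδ0
  refine sub_pos.mp (pos_of_mul_pos_right (a := δ ^ 2) ?_ hδ2.le)
  linear_combination hpos

lemma exists_forall_of_eventually_nhdsGT {p : ℝ → Prop} (h : ∀ᶠ x in 𝓝[>] 0, p x) {c : ℝ}
    (hc : 0 < c) : ∃ x₀, 0 < x₀ ∧ x₀ ≤ c ∧ ∀ x, 0 < x → x < x₀ → p x := by
  obtain ⟨u, hu, hsub⟩ := mem_nhdsGT_iff_exists_Ioo_subset.mp h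
  exact ⟨min u c, lt_min hu hc, min_le_right u c,
    fun x hx hxu => hsub ⟨hx, hxu.trans_le (min_le_left u c)⟩⟩

lemma meanQ_lt_meanQ {V : Type} [Fintype V] [DecidableEq V] {G H : SimpleGraph V}
    {α : V → ℝ} (hG : 0 < 1 + ∑ I ∈ indepSets G, TI G α I)
    (hH : 0 < 1 + ∑ I ∈ indepSets H, TI H α I)
    (h : (∑ I ∈ indepSets G, EI G α I) * (1 + ∑ I ∈ indepSets H, TI H α I) <
      (∑ I ∈ indepSets H, EI H α I) * (1 + ∑ I ∈ indepSets G, TI G α I)) :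
    meanQ G α < meanQ H α := by
  rwa [meanQ, meanQ, inv_mul_eq_div, inv_mul_eq_div, div_lt_div_iff₀ hG hH]

section Braess

variable {V : Type} [Fintype V] [DecidableEq V] {G : SimpleGraph V} {a b : V → ℝ}
  {Ihat : Finset V}

lemma eventually_sum_mul_lt_addEdge {u v : V} (ha : ∀ i, 0 < a i)
    (hgap : ∀ Q ∈ indepSets G, Q ≠ Ihat → 0 < gap G a Q) (hsat : gap G a Ihat = 0)
    (hd : 0 < gap G b Ihat) (hIhat : Ihat ∈ indepSets G) (huv : u ≠ v) (hadj : ¬ G.Adj u v)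
    (hfree : ∀ J ∈ indepSets G, Ihat ⊆ J → u ∉ J ∧ v ∉ J) :
    ∀ᶠ δ in 𝓝[≠] 0,
      (∑ I ∈ indepSets G, EI G (fun i => a i + b i * δ) I) *
          (1 + ∑ I ∈ indepSets (addEdge G u v), TI (addEdge G u v) (fun i => a i + b i * δ) I) <
        (∑ I ∈ indepSets (addEdge G u v), EI (addEdge G u v) (fun i => a i + b i * δ) I) *
          (1 + ∑ I ∈ indepSets G, TI G (fun i => a i + b i * δ) I) := by
  have hIhat_ne := (mem_indepSets.mp hIhat).1
  obtain ⟨B, hB, hTs, hEs⟩ := exists_tendsto_sum_of_saturated ha hgap hsat hd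
    (filter_subset _ _) (mem_filter.mpr ⟨hIhat, subset_rfl⟩)
  have hκ : 0 < aSum a (nbr G Ihat) / gap G b Ihat := by
    refine div_pos ?_ hd
    rw [sub_eq_zero.mp hsat]
    exact sum_pos (fun i _ => ha i) hIhat_ne
  have hgap' : ∀ Q ∈ indepSets (addEdge G u v), Q ≠ Ihat → 0 < gap (addEdge G u v) a Q :=
    fun Q hQ hne => (hgap Q (indepSets_anti (le_addEdge u v) hQ) hne).trans_le
      (gap_le_gap_of_le (le_addEdge u v) (fun i => (ha i).le) Q)
  have hcurve := (tendsto_affine a b).mono_left (nhdsWithin_le_nhds : 𝓝[≠] (0 : ℝ) ≤ 𝓝 0)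
  obtain ⟨hTr, hEr⟩ := continuousAt_sum_TI_EI_of_not_subset hgap
  obtain ⟨hTr', hEr'⟩ := continuousAt_sum_TI_EI_of_not_subset hgap'
  have hlt := sum_TI_addEdge_lt_of_not_subset ha hgap hIhat_ne
    (hfree Ihat hIhat subset_rfl).1 huv hadj
  filter_upwards [eventually_mul_lt_mul_of_tendsto hTs hEs (mul_pos hκ hB)
    (hTr.tendsto.comp hcurve) (hTr'.tendsto.comp hcurve) hlt
    (hEr.tendsto.comp hcurve) (hEr'.tendsto.comp hcurve)] with δ hδ
  rw [← sum_filter_add_sum_filter_not (indepSets G) (Ihat ⊆ ·),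
    ← sum_filter_add_sum_filter_not (indepSets G) (Ihat ⊆ ·),
    sum_indepSets_addEdge hfree (fun H I => TI H _ I) fun I hI h => (TI_EI_congr_graph _ hI h).1,
    sum_indepSets_addEdge hfree (fun H I => EI H _ I) fun I hI h => (TI_EI_congr_graph _ hI h).2]
  exact hδ

end Braess

end MatchingGraph

open MatchingGraph

theorem stmt6_general
    {V : Type} [Fintype V] [DecidableEq V] (G : SimpleGraph V)
    (istar jstar : V) (hne : istar ≠ jstar) (hnadj : ¬ G.Adj istar jstar)
    (a b : V → ℝ) (δbar : ℝ) (hδbar : 0 < δbar)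
    (ha : ∀ i, 0 < a i)
    (hpos : ∀ δ : ℝ, 0 < δ → δ ≤ δbar → ∀ i, 0 < a i + b i * δ)
    (hN : ∀ δ : ℝ, 0 < δ → δ ≤ δbar → Ncond G fun i => a i + b i * δ)
    (Ihat : Finset V) (hIhat : Ihat ∈ indepSets G)
    (hsat : aSum a (nbr G Ihat) = aSum a Ihat)
    (huniq : ∀ J ∈ indepSets G, aSum a (nbr G J) = aSum a J → J = Ihat)
    (hmem : istar ∉ Ihat ∧ jstar ∉ Ihat ∧
      ¬ ∃ J ∈ indepSets G, (istar ∈ J ∨ jstar ∈ J) ∧ Ihat ⊆ J) :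
    ∃ δ0 : ℝ, 0 < δ0 ∧ δ0 ≤ δbar ∧ ∀ δ : ℝ, 0 < δ → δ < δ0 →
      meanQ G (fun i => a i + b i * δ) <
        meanQ (addEdge G istar jstar) (fun i => a i + b i * δ) := by
  have hsat' : gap G a Ihat = 0 := sub_eq_zero.mpr hsat
  have hgap : ∀ Q ∈ indepSets G, Q ≠ Ihat → 0 < gap G a Q := fun Q hQ hQI =>
    (gap_nonneg_of_forall_Ncond hδbar hN hQ).lt_of_ne
      fun h => hQI (huniq Q hQ (sub_eq_zero.mp h.symm))
  have hd : 0 < gap G b Ihat := by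
    have h := sub_pos.mpr (hN δbar hδbar le_rfl Ihat hIhat)
    rw [← gap, gap_affine, hsat', zero_add] at h
    exact pos_of_mul_pos_right h hδbar.le
  have hfree : ∀ J ∈ indepSets G, Ihat ⊆ J → istar ∉ J ∧ jstar ∉ J := fun J hJ hIJ =>
    ⟨fun h => hmem.2.2 ⟨J, hJ, Or.inl h, hIJ⟩, fun h => hmem.2.2 ⟨J, hJ, Or.inr h, hIJ⟩⟩
  have hev := eventually_sum_mul_lt_addEdge ha hgap hsat' hd hIhat hne hnadj hfree
  refine exists_forall_of_eventually_nhdsGT ?_ hδbar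
  filter_upwards [nhdsGT_le_nhdsNE 0 hev, Ioo_mem_nhdsGT hδbar] with δ hδ hδ'
  have hα := hpos δ hδ'.1 hδ'.2.le
  have hNδ := hN δ hδ'.1 hδ'.2.le
  exact meanQ_lt_meanQ (one_add_sum_TI_pos hα hNδ)
    (one_add_sum_TI_pos hα (hNδ.mono (le_addEdge _ _) fun i => (hα i).le)) hδ

theorem stmt6
    {V : Type} [Fintype V] [DecidableEq V] (G : SimpleGraph V)
    (istar jstar : V) (hne : istar ≠ jstar) (hnadj : ¬ G.Adj istar jstar)
    (a b : V → ℝ) (δbar : ℝ) (hδbar : 0 < δbar)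
    (ha : ∀ i, 0 < a i)
    (hpos : ∀ δ : ℝ, 0 < δ → δ ≤ δbar → ∀ i, 0 < a i + b i * δ)
    (hdist : ∀ δ : ℝ, 0 < δ → δ ≤ δbar → ∑ i, (a i + b i * δ) = 1)
    (hN : ∀ δ : ℝ, 0 < δ → δ ≤ δbar → Ncond G fun i => a i + b i * δ)
    (Ihat : Finset V) (hIhat : Ihat ∈ indepSets G)
    (hsat : aSum a (nbr G Ihat) = aSum a Ihat)
    (huniq : ∀ J ∈ indepSets G, aSum a (nbr G J) = aSum a J → J = Ihat)
    (hmem : istar ∉ Ihat ∧ jstar ∉ Ihat ∧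
      ¬ ∃ J ∈ indepSets G, (istar ∈ J ∨ jstar ∈ J) ∧ Ihat ⊆ J) :
    ∃ δ0 : ℝ, 0 < δ0 ∧ δ0 ≤ δbar ∧ ∀ δ : ℝ, 0 < δ → δ < δ0 →
      meanQ G (fun i => a i + b i * δ) <
        meanQ (addEdge G istar jstar) (fun i => a i + b i * δ) :=
  stmt6_general G istar jstar hne hnadj a b δbar hδbar ha hpos hN Ihat hIhat hsat huniq hmem
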